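/- (Input shaping, dissipation identity of Proposition 3.) Let additionally γ, K_i, K_p > 0 and U* ∈ ℝ be constants, and let U : [0,∞) → ℝ be continuously differentiable with C·w_z(1,t) = −γ·U(t) for all t ≥ 0 (hence C·w_zt(1,t) = −γ·U'(t)), and satisfying the input-shaping control law K_p·U'(t) = −K_i·(U(t) − U*) + γ·w_tt(1,t) for all t ≥ 0 (obtained by differentiating U(t) = −(1/K_p)·(K_i·ψ(t) − γ·(w_t(1,t) − p*)) + U* with ψ'(t) = U(t) − U*). Define the shaped storage S_d(t) = S(t) + (K_i/2)·(U(t) − U*)². Then for every t ≥ 0, dS_d/dt(t) = −b·∫₀¹ w_tt(z,t)² dz − K_p·U'(t)² ≤ 0. -/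

import Mathlib

/-!
Differentiating under the integral, `dS/dt = ∫₀¹ (C w_zt w_ztt + ρ w_tt w_ttt) dz`. The equation of
motion differentiated in `t` replaces `ρ w_ttt` by `C w_zzt − b w_tt`, and integrating
`w_zzt w_tt + w_zt w_ztt` by parts leaves the boundary flux `C w_zt w_tt` at `z = 1` (the clamp
makes `w_tt(0, t) = 0`). The boundary condition turns this flux into `−γ U' w_tt(1, t)`, which the
control law cancels against the derivative `K_i (U − U*) U'` of the shaping term up to `−K_p U'²`.
Identities that hold only for `t ≥ 0` may still be differentiated at `t = 0`, since one-sided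
derivatives on `[0, ∞)` are unique.
-/

open MeasureTheory intervalIntegral

theorem HasDerivAt.eq_of_eqOn_Ici {E : Type*} [NormedAddCommGroup E] [NormedSpace ℝ E]
    {f g : ℝ → E} {f' g' : E} {a x : ℝ} (hf : HasDerivAt f f' x) (hg : HasDerivAt g g' x)
    (hfg : Set.EqOn f g (Set.Ici a)) (hx : a ≤ x) : f' = g' :=
  (uniqueDiffOn_Ici a x hx).eq_deriv _
    (hf.hasDerivWithinAt.congr_of_mem (fun _ hy => (hfg hy).symm) hx) hg.hasDerivWithinAt

theorem hasDerivAt_intervalIntegral_of_continuous {E : Type*} [NormedAddCommGroup E]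
    [NormedSpace ℝ E] [CompleteSpace E] {F F' : ℝ → ℝ → E} {a b t : ℝ}
    (hF : ∀ τ x, HasDerivAt (fun σ => F σ x) (F' τ x) τ)
    (hFc : Continuous (Function.uncurry F)) (hF'c : Continuous (Function.uncurry F')) :
    HasDerivAt (fun τ => ∫ x in a..b, F τ x) (∫ x in a..b, F' t x) t := by
  have hslice : ∀ τ, Continuous (F τ) := fun τ => hFc.comp (Continuous.prodMk_right τ)
  have hsum : ∀ τ, (∫ σ in (0:ℝ)..τ, ∫ x in a..b, F' σ x)
      = (∫ x in a..b, F τ x) - ∫ x in a..b, F 0 x := by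
    intro τ
    rw [intervalIntegral_intervalIntegral_swap
        ((hF'c.continuousOn.integrableOn_compact (μ := volume)
          (isCompact_uIcc.prod isCompact_uIcc)).mono_set
          (Set.prod_mono Set.uIoc_subset_uIcc Set.uIoc_subset_uIcc)),
      ← intervalIntegral.integral_sub ((hslice τ).intervalIntegrable a b)
        ((hslice 0).intervalIntegrable a b)]
    refine integral_congr fun x _ => integral_eq_sub_of_hasDerivAt (fun σ _ => hF σ x) ?_
    exact (hF'c.comp (Continuous.prodMk_left x)).intervalIntegrable 0 τ
  have hG : Continuous fun σ => ∫ x in a..b, F' σ x :=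
    intervalIntegral.continuous_parametric_intervalIntegral_of_continuous' hF'c a b
  have hFTC := (hG.integral_hasStrictDerivAt 0 t).hasDerivAt.add_const (∫ x in a..b, F 0 x)
  simp only [hsum, sub_add_cancel] at hFTC
  exact hFTC

theorem integral_eq_boundary_flux_sub_damping {ρ C b : ℝ} {p v p' v' a : ℝ → ℝ}
    (hp : ∀ z, HasDerivAt p (p' z) z) (hv : ∀ z, HasDerivAt v (v' z) z)
    (hp'c : Continuous p') (hv'c : Continuous v')
    (hbal : ∀ z ∈ Set.Icc (0:ℝ) 1, ρ * a z = C * p' z - b * v z) :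
    ∫ z in (0:ℝ)..1, (C * p z * v' z + ρ * v z * a z)
      = C * (p 1 * v 1 - p 0 * v 0) - b * ∫ z in (0:ℝ)..1, v z ^ 2 := by
  have hpc : Continuous p := continuous_iff_continuousAt.2 fun z => (hp z).continuousAt
  have hvc : Continuous v := continuous_iff_continuousAt.2 fun z => (hv z).continuousAt
  have hIBP : ∫ z in (0:ℝ)..1, p' z * v z + p z * v' z = p 1 * v 1 - p 0 * v 0 :=
    integral_deriv_mul_eq_sub (fun z _ => hp z) (fun z _ => hv z)
      (hp'c.intervalIntegrable 0 1) (hv'c.intervalIntegrable 0 1)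
  have hcongr : Set.EqOn (fun z => C * p z * v' z + ρ * v z * a z)
      (fun z => C * (p' z * v z + p z * v' z) - b * v z ^ 2) (Set.uIcc 0 1) := by
    intro z hz
    rw [Set.uIcc_of_le zero_le_one] at hz
    linear_combination v z * hbal z hz
  rw [integral_congr hcongr, intervalIntegral.integral_sub, intervalIntegral.integral_const_mul,
    intervalIntegral.integral_const_mul, hIBP]
  · exact (continuous_const.mul ((hp'c.mul hvc).add (hpc.mul hv'c))).intervalIntegrable 0 1
  · exact (continuous_const.mul (hvc.pow 2)).intervalIntegrable 0 1

noncomputable def velocityStorage (ρ C : ℝ) (wzt wtt : ℝ → ℝ → ℝ) (t : ℝ) : ℝ :=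
  (1/2) * ∫ z in (0:ℝ)..1, (C * (wzt z t)^2 + ρ * (wtt z t)^2)

theorem hasDerivAt_velocityStorage {ρ C b t : ℝ} {wzt wtt wzzt wztt wttt : ℝ → ℝ → ℝ}
    (hwzzt : ∀ z, HasDerivAt (fun ζ => wzt ζ t) (wzzt z t) z)
    (hwztt : ∀ z τ, HasDerivAt (fun σ => wzt z σ) (wztt z τ) τ)
    (hwztt' : ∀ z, HasDerivAt (fun ζ => wtt ζ t) (wztt z t) z)
    (hwttt : ∀ z τ, HasDerivAt (fun σ => wtt z σ) (wttt z τ) τ)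
    (hwztc : Continuous (Function.uncurry wzt)) (hwttc : Continuous (Function.uncurry wtt))
    (hwzztc : Continuous (Function.uncurry wzzt)) (hwzttc : Continuous (Function.uncurry wztt))
    (hwtttc : Continuous (Function.uncurry wttt))
    (hpde : ∀ z ∈ Set.Icc (0:ℝ) 1, ρ * wttt z t = C * wzzt z t - b * wtt z t) :
    HasDerivAt (velocityStorage ρ C wzt wtt)
      (C * (wzt 1 t * wtt 1 t - wzt 0 t * wtt 0 t) - b * ∫ z in (0:ℝ)..1, (wtt z t)^2) t := by
  have hint := hasDerivAt_intervalIntegral_of_continuous (a := 0) (b := 1) (t := t)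
    (F := fun τ z => C * (wzt z τ)^2 + ρ * (wtt z τ)^2)
    (F' := fun τ z => 2 * (C * wzt z τ * wztt z τ + ρ * wtt z τ * wttt z τ))
    (fun τ z => ((((hwztt z τ).pow 2).const_mul C).add
      (((hwttt z τ).pow 2).const_mul ρ)).congr_deriv (by ring))
    (by fun_prop) (by fun_prop)
  have hbalance := integral_eq_boundary_flux_sub_damping (ρ := ρ) (C := C) (b := b)
    (p := fun z => wzt z t) (v := fun z => wtt z t) (a := fun z => wttt z t)
    hwzzt hwztt' (by fun_prop) (by fun_prop) hpde
  rw [intervalIntegral.integral_const_mul, hbalance] at hint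
  exact (hint.const_mul (1/2 : ℝ)).congr_deriv (by ring)

theorem input_shaping_dissipation_general
    (ρ C b : ℝ) (hb : 0 < b)
    (w wz wt wzz wzt wtt : ℝ → ℝ → ℝ)
    (hwt : ∀ z t : ℝ, HasDerivAt (fun τ => w z τ) (wt z t) t)
    (hwzt' : ∀ z t : ℝ, HasDerivAt (fun τ => wz z τ) (wzt z t) t)
    (hwtt : ∀ z t : ℝ, HasDerivAt (fun τ => wt z τ) (wtt z t) t)
    (hwztc : Continuous (Function.uncurry wzt))
    (hwttc : Continuous (Function.uncurry wtt))
    (hpde : ∀ z ∈ Set.Icc (0:ℝ) 1, ∀ t : ℝ, 0 ≤ t →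
      ρ * wtt z t = C * wzz z t - b * wt z t)
    (hclamp : ∀ t : ℝ, 0 ≤ t → w 0 t = 0)
    (wzzt wztt wttt : ℝ → ℝ → ℝ)
    (hwzzt : ∀ z t : ℝ, HasDerivAt (fun τ => wzz z τ) (wzzt z t) t)
    (hwzzt' : ∀ z t : ℝ, HasDerivAt (fun ζ => wzt ζ t) (wzzt z t) z)
    (hwztt : ∀ z t : ℝ, HasDerivAt (fun τ => wzt z τ) (wztt z t) t)
    (hwztt' : ∀ z t : ℝ, HasDerivAt (fun ζ => wtt ζ t) (wztt z t) z)
    (hwttt : ∀ z t : ℝ, HasDerivAt (fun τ => wtt z τ) (wttt z t) t)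
    (hwzztc : Continuous (Function.uncurry wzzt))
    (hwzttc : Continuous (Function.uncurry wztt))
    (hwtttc : Continuous (Function.uncurry wttt))
    (γ Ki Kp Ustar : ℝ) (hKp : 0 < Kp)
    (U U' : ℝ → ℝ)
    (hU : ∀ t : ℝ, HasDerivAt U (U' t) t)
    (hbc : ∀ t : ℝ, 0 ≤ t → C * wz 1 t = -γ * U t)
    (hlaw : ∀ t : ℝ, 0 ≤ t → Kp * U' t = -Ki * (U t - Ustar) + γ * wtt 1 t) :
    ∀ t : ℝ, 0 ≤ t →
      HasDerivAt
        (fun τ => (1/2) * (∫ z in (0:ℝ)..1, (C * (wzt z τ)^2 + ρ * (wtt z τ)^2))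
          + Ki/2 * (U τ - Ustar)^2)
        (-(b * ∫ z in (0:ℝ)..1, (wtt z t)^2) - Kp * (U' t)^2) t ∧
      -(b * ∫ z in (0:ℝ)..1, (wtt z t)^2) - Kp * (U' t)^2 ≤ 0 := by
  intro t ht
  have hwt0 : ∀ τ, 0 ≤ τ → wt 0 τ = 0 := fun τ hτ =>
    (hwt 0 τ).eq_of_eqOn_Ici (hasDerivAt_const τ 0) hclamp hτ
  have hwtt0 : wtt 0 t = 0 := (hwtt 0 t).eq_of_eqOn_Ici (hasDerivAt_const t 0) hwt0 ht
  have hbc' : C * wzt 1 t = -γ * U' t :=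
    ((hwzt' 1 t).const_mul C).eq_of_eqOn_Ici ((hU t).const_mul (-γ)) hbc ht
  have hpde' : ∀ z ∈ Set.Icc (0:ℝ) 1, ρ * wttt z t = C * wzzt z t - b * wtt z t :=
    fun z hz => ((hwttt z t).const_mul ρ).eq_of_eqOn_Ici
      (((hwzzt z t).const_mul C).sub ((hwtt z t).const_mul b)) (hpde z hz) ht
  have hS := hasDerivAt_velocityStorage (hwzzt' · t) hwztt (hwztt' · t) hwttt
    hwztc hwttc hwzztc hwzttc hwtttc hpde'
  have hshaping := (((hU t).sub_const Ustar).pow 2).const_mul (Ki/2)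
  refine ⟨(hS.add hshaping).congr_deriv ?_, ?_⟩
  · rw [hwtt0]
    linear_combination wtt 1 t * hbc' + U' t * hlaw t ht
  · have hJ : 0 ≤ ∫ z in (0:ℝ)..1, (wtt z t)^2 :=
      intervalIntegral.integral_nonneg zero_le_one fun z _ => sq_nonneg (wtt z t)
    linarith [mul_nonneg hb.le hJ, mul_nonneg hKp.le (sq_nonneg (U' t))]

/-- Input shaping, dissipation identity of Proposition 3:
dS_d/dt(t) = −b·∫₀¹ w_tt² dz − K_p·U'(t)² ≤ 0. -/
theorem input_shaping_dissipation
    (ρ C b : ℝ) (hρ : 0 < ρ) (hC : 0 < C) (hb : 0 < b)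
    (w wz wt wzz wzt wtt : ℝ → ℝ → ℝ)
    (hwz : ∀ z t : ℝ, HasDerivAt (fun ζ => w ζ t) (wz z t) z)
    (hwt : ∀ z t : ℝ, HasDerivAt (fun τ => w z τ) (wt z t) t)
    (hwzz : ∀ z t : ℝ, HasDerivAt (fun ζ => wz ζ t) (wzz z t) z)
    (hwzt : ∀ z t : ℝ, HasDerivAt (fun ζ => wt ζ t) (wzt z t) z)
    (hwzt' : ∀ z t : ℝ, HasDerivAt (fun τ => wz z τ) (wzt z t) t)
    (hwtt : ∀ z t : ℝ, HasDerivAt (fun τ => wt z τ) (wtt z t) t)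
    (hwzc : Continuous (Function.uncurry wz))
    (hwtc : Continuous (Function.uncurry wt))
    (hwzzc : Continuous (Function.uncurry wzz))
    (hwztc : Continuous (Function.uncurry wzt))
    (hwttc : Continuous (Function.uncurry wtt))
    (hpde : ∀ z ∈ Set.Icc (0:ℝ) 1, ∀ t : ℝ, 0 ≤ t →
      ρ * wtt z t = C * wzz z t - b * wt z t)
    (hclamp : ∀ t : ℝ, 0 ≤ t → w 0 t = 0)
    (wzzt wztt wttt : ℝ → ℝ → ℝ)
    (hwzzt : ∀ z t : ℝ, HasDerivAt (fun τ => wzz z τ) (wzzt z t) t)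
    (hwzzt' : ∀ z t : ℝ, HasDerivAt (fun ζ => wzt ζ t) (wzzt z t) z)
    (hwztt : ∀ z t : ℝ, HasDerivAt (fun τ => wzt z τ) (wztt z t) t)
    (hwztt' : ∀ z t : ℝ, HasDerivAt (fun ζ => wtt ζ t) (wztt z t) z)
    (hwttt : ∀ z t : ℝ, HasDerivAt (fun τ => wtt z τ) (wttt z t) t)
    (hwzztc : Continuous (Function.uncurry wzzt))
    (hwzttc : Continuous (Function.uncurry wztt))
    (hwtttc : Continuous (Function.uncurry wttt))
    (γ Ki Kp Ustar : ℝ) (hγ : 0 < γ) (hKi : 0 < Ki) (hKp : 0 < Kp)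
    (U U' : ℝ → ℝ)
    (hU : ∀ t : ℝ, HasDerivAt U (U' t) t) (hU'c : Continuous U')
    (hbc : ∀ t : ℝ, 0 ≤ t → C * wz 1 t = -γ * U t)
    (hlaw : ∀ t : ℝ, 0 ≤ t → Kp * U' t = -Ki * (U t - Ustar) + γ * wtt 1 t) :
    ∀ t : ℝ, 0 ≤ t →
      HasDerivAt
        (fun τ => (1/2) * (∫ z in (0:ℝ)..1, (C * (wzt z τ)^2 + ρ * (wtt z τ)^2))
          + Ki/2 * (U τ - Ustar)^2)
        (-(b * ∫ z in (0:ℝ)..1, (wtt z t)^2) - Kp * (U' t)^2) t ∧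
      -(b * ∫ z in (0:ℝ)..1, (wtt z t)^2) - Kp * (U' t)^2 ≤ 0 :=
  input_shaping_dissipation_general ρ C b hb w wz wt wzz wzt wtt hwt hwzt' hwtt hwztc hwttc hpde
    hclamp wzzt wztt wttt hwzzt hwzzt' hwztt hwztt' hwttt hwzztc hwzttc hwtttc γ Ki Kp Ustar hKp U
    U' hU hbc hlaw
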